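/- arXiv:2301.11713 — 2 statements merged into one kernel-verified Lean document; each statement's English description precedes it below -/
import Mathlib

section
/- If a finite connected graph G contains three distinct central vertices, each of which is uniquely eccentric, then DL(G) ≤ r(G) − 1. -/
/-- `G` admits a `k`-dispersed labelling. -/
def HasDispersedLabelling {V : Type*} [Fintype V] (G : SimpleGraph V) (k : ℕ) : Prop :=
  ∃ φ : Fin (Fintype.card V) ≃ V,
    ∀ i j : Fin (Fintype.card V), (j : ℕ) = (i : ℕ) + 1 → k ≤ G.dist (φ i) (φ j)

/-- `DL G`: the maximum `k` such that `G` admits a `k`-dispersed labelling. -/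
noncomputable def DL {V : Type*} [Fintype V] (G : SimpleGraph V) : ℕ :=
  sSup {k | HasDispersedLabelling G k}

/-- The eccentricity of a vertex: the maximum distance to another vertex. -/
noncomputable def eccent {V : Type*} [Fintype V] (G : SimpleGraph V) (v : V) : ℕ :=
  Finset.univ.sup (fun u => G.dist v u)

/-- The radius of a graph: the minimum eccentricity of a vertex. -/
noncomputable def graphRadius {V : Type*} [Fintype V] (G : SimpleGraph V) : ℕ :=
  sInf (Set.range (eccent G))

/-- A vertex is uniquely eccentric if exactly one vertex achieves its eccentricity. -/
def UniquelyEccentric {V : Type*} [Fintype V] (G : SimpleGraph V) (v : V) : Prop :=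
  ∃! u : V, G.dist v u = eccent G v

/-- A central vertex: one whose eccentricity equals the radius. -/
def IsCentral {V : Type*} [Fintype V] (G : SimpleGraph V) (v : V) : Prop :=
  eccent G v = graphRadius G

/-!
In a `k`-dispersed labelling with `k ≥ ε(v)`, both labelling-neighbours of `v` are at distance at
least `ε(v)` from `v`, hence exactly `ε(v)`. If `v` is uniquely eccentric they coincide, which is
impossible, so `v` must carry the first or the last label. Three distinct such vertices cannot
share two labels; for central vertices `ε(v) = r(G)`, so no labelling is `k`-dispersed
for `k ≥ r(G)`.
-/

section

variable {V : Type*} [Fintype V] {G : SimpleGraph V}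

lemma dist_le_eccent (G : SimpleGraph V) (v w : V) : G.dist v w ≤ eccent G v :=
  Finset.le_sup (Finset.mem_univ w)

lemma dist_eq_eccent_of_eccent_le {v w : V} {k : ℕ} (hk : eccent G v ≤ k)
    (hw : k ≤ G.dist v w) : G.dist v w = eccent G v :=
  (dist_le_eccent G v w).antisymm (hk.trans hw)

theorem UniquelyEccentric.symm_eq_zero_or_last_of_dispersed {v : V} (hv : UniquelyEccentric G v)
    {k : ℕ} (hk : eccent G v ≤ k) {φ : Fin (Fintype.card V) ≃ V}
    (hφ : ∀ i j : Fin (Fintype.card V), (j : ℕ) = i + 1 → k ≤ G.dist (φ i) (φ j)) :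
    (φ.symm v : ℕ) = 0 ∨ (φ.symm v : ℕ) = Fintype.card V - 1 := by
  by_contra! ⟨hfirst, hlast⟩
  set i := φ.symm v
  have hprev : (i : ℕ) - 1 < Fintype.card V := by omega
  have hnext : (i : ℕ) + 1 < Fintype.card V := by omega
  have hv_eq : φ i = v := φ.apply_symm_apply v
  have hdist_prev : G.dist v (φ ⟨i - 1, hprev⟩) = eccent G v := by
    refine dist_eq_eccent_of_eccent_le hk ?_
    rw [G.dist_comm, ← hv_eq]
    exact hφ _ _ (by simp only; omega)
  have hdist_next : G.dist v (φ ⟨i + 1, hnext⟩) = eccent G v := by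
    refine dist_eq_eccent_of_eccent_le hk ?_
    rw [← hv_eq]
    exact hφ _ _ rfl
  have hsame := φ.injective (hv.unique hdist_prev hdist_next)
  rw [Fin.mk.injEq] at hsame
  omega

theorem not_hasDispersedLabelling_of_three_uniquelyEccentric {a b c : V}
    (hab : a ≠ b) (hac : a ≠ c) (hbc : b ≠ c)
    (ha : UniquelyEccentric G a) (hb : UniquelyEccentric G b) (hc : UniquelyEccentric G c)
    {k : ℕ} (hak : eccent G a ≤ k) (hbk : eccent G b ≤ k) (hck : eccent G c ≤ k) :
    ¬ HasDispersedLabelling G k := by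
  rintro ⟨φ, hφ⟩
  have hpos_ne : ∀ {x y : V}, x ≠ y → (φ.symm x : ℕ) ≠ φ.symm y :=
    fun hxy h => hxy (φ.symm.injective (Fin.ext h))
  have := ha.symm_eq_zero_or_last_of_dispersed hak hφ
  have := hb.symm_eq_zero_or_last_of_dispersed hbk hφ
  have := hc.symm_eq_zero_or_last_of_dispersed hck hφ
  have := hpos_ne hab
  have := hpos_ne hac
  have := hpos_ne hbc
  omega

end

theorem DL_le_radius_sub_one_of_three_uniquely_eccentric_central_general
    {V : Type*} [Fintype V] (G : SimpleGraph V)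
    (a b c : V) (hab : a ≠ b) (hac : a ≠ c) (hbc : b ≠ c)
    (ha : IsCentral G a ∧ UniquelyEccentric G a)
    (hb : IsCentral G b ∧ UniquelyEccentric G b)
    (hc : IsCentral G c ∧ UniquelyEccentric G c) :
    DL G ≤ graphRadius G - 1 := by
  refine csSup_le' fun k hk => ?_
  by_contra! hlt
  have hrk : graphRadius G ≤ k := by omega
  exact not_hasDispersedLabelling_of_three_uniquelyEccentric hab hac hbc ha.2 hb.2 hc.2
    (ha.1.trans_le hrk) (hb.1.trans_le hrk) (hc.1.trans_le hrk) hk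

theorem DL_le_radius_sub_one_of_three_uniquely_eccentric_central
    {V : Type*} [Fintype V] (G : SimpleGraph V) (hG : G.Connected)
    (a b c : V) (hab : a ≠ b) (hac : a ≠ c) (hbc : b ≠ c)
    (ha : IsCentral G a ∧ UniquelyEccentric G a)
    (hb : IsCentral G b ∧ UniquelyEccentric G b)
    (hc : IsCentral G c ∧ UniquelyEccentric G c) :
    DL G ≤ graphRadius G - 1 :=
  DL_le_radius_sub_one_of_three_uniquely_eccentric_central_general G a b c hab hac hbc ha hb hc
end

section
/- For odd n ≥ 3 with n not divisible by 3, the labelling of the 3×n grid L_{3,n} that places label 1 at the bottom-left corner and moves from label j to j+1 by going (n−1)/2 columns to the right (mod n) and one row up (mod 3) is a well-defined bijection and is an (n+1)/2-dispersed labelling; hence DL(L_{3,n}) = (n+1)/2. -/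
/-- The `m × n` grid graph, as the box product of two path graphs. -/
def gridGraph (m n : ℕ) : SimpleGraph (Fin m × Fin n) :=
  SimpleGraph.boxProd (SimpleGraph.pathGraph m) (SimpleGraph.pathGraph n)

namespace SimpleGraph

lemma dist_boxProd_of_preconnected {α β : Type*} {G : SimpleGraph α} {H : SimpleGraph β}
    (hG : G.Preconnected) (hH : H.Preconnected) (x y : α × β) :
    (G □ H).dist x y = G.dist x.1 y.1 + H.dist x.2 y.2 := by
  have h₁ := hG x.1 y.1
  have h₂ := hH x.2 y.2
  have h : (G □ H).Reachable x y := reachable_boxProd.2 ⟨h₁, h₂⟩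
  exact_mod_cast (show ((G □ H).dist x y : ℕ∞) = G.dist x.1 y.1 + H.dist x.2 y.2 by
    rw [h.coe_dist_eq_edist, edist_boxProd, h₁.coe_dist_eq_edist, h₂.coe_dist_eq_edist])

lemma pathGraph_dist_le_length {n : ℕ} {u v : Fin n} (p : (pathGraph n).Walk u v) :
    (u : ℕ).dist v ≤ p.length := by
  induction p with
  | nil => simp
  | cons hadj _ ih =>
    rw [pathGraph_adj] at hadj
    simp only [Walk.length_cons, Nat.dist] at ih ⊢
    omega

lemma pathGraph_dist_le {n : ℕ} (u v : Fin n) : (pathGraph n).dist u v ≤ (u : ℕ).dist v := by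
  wlog huv : (u : ℕ) ≤ v generalizing u v
  · rw [dist_comm, Nat.dist_comm]
    exact this v u (by omega)
  obtain ⟨k, hk⟩ := Nat.exists_eq_add_of_le huv
  induction k generalizing v with
  | zero => simp [Fin.ext hk.symm]
  | succ k ih =>
    let w : Fin n := ⟨u + k, by omega⟩
    have hwv : (pathGraph n).Adj w v := by rw [pathGraph_adj]; simp [w]; omega
    calc (pathGraph n).dist u v ≤ (pathGraph n).dist u w + (pathGraph n).dist w v :=
          (pathGraph_preconnected n u w).dist_triangle_left v
      _ ≤ k + 1 := add_le_add ((ih w (by simp [w]) rfl).trans (by simp [w, Nat.dist]))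
          (dist_eq_one_iff_adj.2 hwv).le
      _ = (u : ℕ).dist v := by simp only [Nat.dist]; omega

lemma pathGraph_dist {n : ℕ} (u v : Fin n) : (pathGraph n).dist u v = (u : ℕ).dist v := by
  obtain ⟨p, hp⟩ := (pathGraph_preconnected n u v).exists_walk_length_eq_dist
  exact (pathGraph_dist_le u v).antisymm (hp ▸ pathGraph_dist_le_length p)

end SimpleGraph

open SimpleGraph

lemma gridGraph_dist {a b : ℕ} (u v : Fin a × Fin b) :
    (gridGraph a b).dist u v = (u.1 : ℕ).dist v.1 + (u.2 : ℕ).dist v.2 := by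
  rw [gridGraph, dist_boxProd_of_preconnected (pathGraph_preconnected a)
    (pathGraph_preconnected b), pathGraph_dist, pathGraph_dist]

lemma gridGraph_dist_le_max {a b : ℕ} (c w : Fin a × Fin b) :
    (gridGraph a b).dist c w ≤ max (c.1 : ℕ) (a - 1 - c.1) + max (c.2 : ℕ) (b - 1 - c.2) := by
  have := w.1.2
  have := w.2.2
  rw [gridGraph_dist]
  simp only [Nat.dist]
  omega

namespace HasDispersedLabelling

variable {V : Type*} [Fintype V] {G : SimpleGraph V} {k : ℕ}

lemma of_bijective {N : ℕ} {f : Fin N → V} (hf : Function.Bijective f)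
    (hk : ∀ i j : Fin N, (j : ℕ) = i + 1 → k ≤ G.dist (f i) (f j)) :
    HasDispersedLabelling G k := by
  have hN : Fintype.card V = N := by simpa using (Fintype.card_of_bijective hf).symm
  exact ⟨(finCongr hN).trans (Equiv.ofBijective f hf), fun i j hij => hk _ _ hij⟩

lemma le_of_forall_dist_le (h : HasDispersedLabelling G k) (hV : 2 ≤ Fintype.card V) {c : V}
    {r : ℕ} (hc : ∀ w, G.dist c w ≤ r) : k ≤ r := by
  obtain ⟨φ, hφ⟩ := h
  obtain ⟨t, ht⟩ := φ.surjective c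
  by_cases hlast : (t : ℕ) + 1 < Fintype.card V
  · have := hφ t ⟨t + 1, hlast⟩ rfl
    rw [ht] at this
    exact this.trans (hc _)
  · have := hφ ⟨t - 1, by omega⟩ t (by simp; omega)
    rw [ht, dist_comm] at this
    exact this.trans (hc _)

end HasDispersedLabelling

lemma Nat.eq_of_mod_eq_of_mul_mod_eq {a b c i j : ℕ} (hab : a.Coprime b) (hbc : b.Coprime c)
    (hi : i < a * b) (hj : j < a * b) (ha : i % a = j % a) (hb : i * c % b = j * c % b) :
    i = j :=
  Nat.ModEq.eq_of_lt_of_lt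
    ((Nat.modEq_and_modEq_iff_modEq_mul hab).1 ⟨ha, Nat.ModEq.cancel_right_of_coprime hbc hb⟩)
    hi hj

lemma Nat.min_le_dist_add_mod {n c m : ℕ} (hc : c < n) (hm : m < n) :
    min m (n - m) ≤ c.dist ((c + m) % n) := by
  rcases Nat.lt_or_ge (c + m) n with hlt | hge
  · rw [Nat.mod_eq_of_lt hlt]
    simp only [Nat.dist]
    omega
  · rw [Nat.mod_eq_sub_mod hge, Nat.mod_eq_of_lt (by omega)]
    simp only [Nat.dist]
    omega

theorem DL_grid_three_rows (n : ℕ) (hodd : Odd n) (h3 : ¬ (3 ∣ n)) :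
    let f : Fin (3 * n) → Fin 3 × Fin n := fun j =>
      (⟨(j : ℕ) % 3, by omega⟩,
       ⟨((j : ℕ) * ((n - 1) / 2)) % n, Nat.mod_lt _ (by omega)⟩)
    Function.Bijective f ∧
      (∀ i j : Fin (3 * n), (j : ℕ) = (i : ℕ) + 1 →
        (n + 1) / 2 ≤ (gridGraph 3 n).dist (f i) (f j)) ∧
      DL (gridGraph 3 n) = (n + 1) / 2 := by
  intro f
  set m := (n - 1) / 2
  have hn : n = 2 * m + 1 := by obtain ⟨t, ht⟩ := hodd; omega
  have hcop3 : Nat.Coprime 3 n := (Nat.Prime.coprime_iff_not_dvd Nat.prime_three).2 h3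
  have hcopm : Nat.Coprime n m := by
    rw [Nat.coprime_comm, hn, add_comm, Nat.coprime_add_mul_right_right]
    exact Nat.coprime_one_right m
  have hbij : Function.Bijective f := by
    refine (Fintype.bijective_iff_injective_and_card f).2 ⟨fun i j hij => Fin.ext ?_, by simp⟩
    exact Nat.eq_of_mod_eq_of_mul_mod_eq hcop3 hcopm i.2 j.2
      (congrArg (fun p => (p.1 : ℕ)) hij) (congrArg (fun p => (p.2 : ℕ)) hij)
  have hdisp : ∀ i j : Fin (3 * n), (j : ℕ) = i + 1 →
      m + 1 ≤ (gridGraph 3 n).dist (f i) (f j) := by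
    intro i j hij
    have hcol := Nat.min_le_dist_add_mod (Nat.mod_lt (i * m) (by omega)) (show m < n by omega)
    rw [Nat.mod_add_mod, ← add_one_mul, ← hij] at hcol
    have hrow : 1 ≤ ((i : ℕ) % 3).dist (j % 3) := by simp only [Nat.dist]; omega
    rw [gridGraph_dist]
    change m + 1 ≤ ((i : ℕ) % 3).dist (j % 3) + (i * m % n : ℕ).dist (j * m % n)
    omega
  have hhalf : (n + 1) / 2 = m + 1 := by omega
  refine ⟨hbij, hhalf ▸ hdisp,
    IsGreatest.csSup_eq ⟨hhalf ▸ .of_bijective hbij hdisp, fun k hk => ?_⟩⟩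
  rw [hhalf]
  refine hk.le_of_forall_dist_le (c := (1, ⟨m, by omega⟩)) (by simp; omega) fun w => ?_
  refine (gridGraph_dist_le_max _ w).trans ?_
  simp only
  omega
end
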